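/- arXiv:1110.1792 — 2 statements merged into one kernel-verified Lean document; each statement's English description precedes it below -/
import Mathlib

section
/- Let Γ ≤ Sim_L(ℝ^{m+2}) act freely and properly discontinuously on ℝ^{m+2}. Suppose γ ∈ Γ commutes with a nontrivial pure translation τ ∈ Γ (τ(x) = x + v, v ≠ 0). Then the similarity factor of γ equals 1. -/
/-!
Suppose `λ ≠ 1`. The linear part `L` of `γ` scales the Lorentz form `Q` by `λ² ≠ 1`, and it fixes
`v` because `γ` commutes with the translation by `v`. Hence `v` is isotropic, and every `x` with
`L x - x ∈ ℝ v` is isotropic and orthogonal to `v`, so lies in `ℝ v` by the Lorentzian signature.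
Thus `L - 1` is invertible on `ℝ^{m+2} / ℝ v`, and `γ` moves some point `x` along `v`:
`γ x = x + c v`. The elements `τ^(-⌊n c⌋) γⁿ` of `Γ` then move `x` by at most `‖v‖`, and they are
pairwise distinct because their linear parts scale `Q` by `λ^(2n)`: this contradicts proper
discontinuity.
-/

noncomputable section

/-- `Vec n` is the euclidean space `ℝ^n`. -/
abbrev Vec (n : ℕ) : Type := Fin n → ℝ

/-- The group of invertible affine transformations of `ℝ^n`. -/
abbrev AffGroup (n : ℕ) := Vec n ≃ᵃ[ℝ] Vec n

/-- The standard Lorentz quadratic form `Q(x) = x₁² + ⋯ + x_{m+1}² − x_{m+2}²` on `ℝ^{m+2}`. -/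
def lorentzQ (m : ℕ) (x : Vec (m + 2)) : ℝ :=
  (∑ i : Fin (m + 1), x i.castSucc ^ 2) - x (Fin.last (m + 1)) ^ 2

/-- Membership in the Lorentzian similarity group
`Sim_L(ℝ^{m+2}) = ℝ^{m+2} ⋊ (O(m+1,1) × ℝ^+)`: the linear part is `λ • A` with `λ > 0`
and `A` a linear map preserving the Lorentz form. -/
def InSimL (m : ℕ) (g : AffGroup (m + 2)) : Prop :=
  ∃ (lam : ℝ) (A : Vec (m + 2) →ₗ[ℝ] Vec (m + 2)), 0 < lam ∧
    (∀ v, lorentzQ m (A v) = lorentzQ m v) ∧ ∀ v, g.linear v = lam • A v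

/-- Properly discontinuous action on `ℝ^n`. -/
def ProperlyDisc {n : ℕ} (Γ : Subgroup (AffGroup n)) : Prop :=
  ∀ K : Set (Vec n), IsCompact K →
    {γ : AffGroup n | γ ∈ Γ ∧ (⇑γ '' K ∩ K).Nonempty}.Finite

/-- Free action on `ℝ^n`. -/
def FreeAction {n : ℕ} (Γ : Subgroup (AffGroup n)) : Prop :=
  ∀ γ ∈ Γ, (∃ x : Vec n, γ x = x) → γ = 1

/-- Cocompact action on `ℝ^n`: some compact set meets every orbit. -/
def CocompactAction {n : ℕ} (Γ : Subgroup (AffGroup n)) : Prop :=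
  ∃ K : Set (Vec n), IsCompact K ∧ ∀ x : Vec n, ∃ γ ∈ Γ, γ x ∈ K

namespace QuadraticMap

variable {R M : Type*} [CommRing R] [AddCommGroup M] [Module R M]
  {Q : QuadraticMap R M R} {L : M →ₗ[R] M} {μ : R}

theorem polar_map_of_map_eq_mul (hL : ∀ x, Q (L x) = μ * Q x) (x y : M) :
    polar Q (L x) (L y) = μ * polar Q x y := by
  simp only [polar, ← L.map_add, hL]
  ring

theorem apply_pow_apply_of_map_eq_mul {e : M ≃ₗ[R] M} (he : ∀ x, Q (e x) = μ * Q x) (n : ℕ)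
    (x : M) : Q ((e ^ n) x) = μ ^ n * Q x := by
  induction n with
  | zero => simp
  | succ n ih => rw [pow_succ', LinearEquiv.mul_apply, he, ih, pow_succ', mul_assoc]

section NoZeroDivisors

variable [NoZeroDivisors R]

theorem apply_eq_zero_of_map_eq_mul (hL : ∀ x, Q (L x) = μ * Q x) (hμ : μ ≠ 1)
    {x : M} (hx : Q (L x) = Q x) : Q x = 0 := by
  have : (μ - 1) * Q x = 0 := by rw [sub_mul, ← hL, hx, one_mul, sub_self]
  exact (mul_eq_zero.mp this).resolve_left (sub_ne_zero.mpr hμ)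

theorem polar_eq_zero_of_map_eq_mul (hL : ∀ x, Q (L x) = μ * Q x) (hμ : μ ≠ 1)
    {x y : M} (hxy : polar Q (L x) (L y) = polar Q x y) : polar Q x y = 0 := by
  have : (μ - 1) * polar Q x y = 0 := by
    rw [sub_mul, ← polar_map_of_map_eq_mul hL, hxy, one_mul, sub_self]
  exact (mul_eq_zero.mp this).resolve_left (sub_ne_zero.mpr hμ)

theorem isotropic_of_map_eq_add_smul (hL : ∀ x, Q (L x) = μ * Q x) (hμ : μ ≠ 1)
    {v x : M} {c : R} (hv : L v = v) (hx : L x = x + c • v) :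
    Q v = 0 ∧ polar Q x v = 0 ∧ Q x = 0 := by
  have hQv : Q v = 0 := apply_eq_zero_of_map_eq_mul hL hμ (by rw [hv])
  have hpolar : polar Q x v = 0 := polar_eq_zero_of_map_eq_mul hL hμ <| by
    rw [hx, hv, polar_add_left, polar_smul_left, polar_self, hQv, smul_zero, smul_zero, add_zero]
  refine ⟨hQv, hpolar, apply_eq_zero_of_map_eq_mul hL hμ ?_⟩
  rw [hx, QuadraticMap.map_add (⇑Q), QuadraticMap.map_smul, polar_smul_right, hQv, hpolar]
  simp

end NoZeroDivisors

end QuadraticMap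

def lorentzForm (m : ℕ) : QuadraticForm ℝ (Vec (m + 2)) :=
  QuadraticMap.weightedSumSquares ℝ (Fin.lastCases (-1) fun _ ↦ 1 : Fin (m + 2) → ℝ)

@[simp]
theorem lorentzForm_apply (m : ℕ) (x : Vec (m + 2)) : lorentzForm m x = lorentzQ m x := by
  simp only [lorentzForm, QuadraticMap.weightedSumSquares_apply, smul_eq_mul,
    Fin.sum_univ_castSucc, Fin.lastCases_castSucc, one_mul, Fin.lastCases_last, neg_mul, lorentzQ, sq]
  ring

theorem eq_zero_of_lorentzQ_eq_zero_of_last_eq_zero {m : ℕ} {x : Vec (m + 2)}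
    (hQ : lorentzQ m x = 0) (hlast : x (Fin.last (m + 1)) = 0) : x = 0 := by
  simp only [lorentzQ, hlast, sq, mul_zero, sub_zero] at hQ
  have hspace := (Finset.sum_eq_zero_iff_of_nonneg fun i _ ↦ mul_self_nonneg (x i.castSucc)).mp hQ
  funext i
  induction i using Fin.lastCases with
  | last => exact hlast
  | cast i => exact mul_self_eq_zero.mp (hspace i (Finset.mem_univ i))

theorem exists_eq_smul_of_isotropic_of_polar_eq_zero {m : ℕ} {x v : Vec (m + 2)} (hv : v ≠ 0)
    (hQv : lorentzForm m v = 0) (hQx : lorentzForm m x = 0)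
    (hpolar : QuadraticMap.polar (lorentzForm m) x v = 0) : ∃ s : ℝ, x = s • v := by
  set t := Fin.last (m + 1)
  have hvt : v t ≠ 0 := fun h ↦
    hv (eq_zero_of_lorentzQ_eq_zero_of_last_eq_zero (lorentzForm_apply m v ▸ hQv) h)
  -- `v t • x - x t • v` is isotropic with vanishing time coordinate.
  have hw : v t • x - x t • v = 0 := by
    refine eq_zero_of_lorentzQ_eq_zero_of_last_eq_zero ?_ (by simp [t, mul_comm])
    rw [← lorentzForm_apply, sub_eq_add_neg, ← neg_smul, QuadraticMap.map_add (⇑(lorentzForm m)),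
      QuadraticMap.map_smul, QuadraticMap.map_smul, QuadraticMap.polar_smul_left,
      QuadraticMap.polar_smul_right, hpolar]
    simp [hQv, hQx]
  refine ⟨x t / v t, ?_⟩
  rw [sub_eq_zero] at hw
  rw [div_eq_inv_mul, mul_smul, ← hw, smul_smul, inv_mul_cancel₀ hvt, one_smul]

theorem comap_sub_id_span_eq_span {m : ℕ} {L : Vec (m + 2) →ₗ[ℝ] Vec (m + 2)} {μ : ℝ}
    (hL : ∀ x, lorentzForm m (L x) = μ * lorentzForm m x) (hμ : μ ≠ 1) {v : Vec (m + 2)}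
    (hv0 : v ≠ 0) (hv : L v = v) : (ℝ ∙ v).comap (L - LinearMap.id) = ℝ ∙ v := by
  apply le_antisymm
  · intro x hx
    obtain ⟨c, hc⟩ := Submodule.mem_span_singleton.mp hx
    have hLx : L x = x + c • v := by
      rw [hc]; simp
    obtain ⟨hQv, hpolar, hQx⟩ := QuadraticMap.isotropic_of_map_eq_add_smul hL hμ hv hLx
    obtain ⟨s, rfl⟩ := exists_eq_smul_of_isotropic_of_polar_eq_zero hv0 hQv hQx hpolar
    exact Submodule.smul_mem _ s (Submodule.mem_span_singleton_self v)
  · intro x hx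
    obtain ⟨s, rfl⟩ := Submodule.mem_span_singleton.mp hx
    simp [hv]

theorem lorentzQ_single_last (m : ℕ) : lorentzQ m (Pi.single (Fin.last (m + 1)) 1) = -1 := by
  simp [lorentzQ]

section Affine

variable {k V : Type*} [Field k] [AddCommGroup V] [Module k V]

/-- `hW` says that `f.linear` preserves `W` and has no eigenvalue `1` on `V ⧸ W`, so the affine
map induced by `f` on `V ⧸ W` has a fixed point. -/
theorem AffineMap.exists_apply_sub_mem_of_comap_eq [FiniteDimensional k V] (f : V →ᵃ[k] V)
    {W : Submodule k V} (hW : W.comap (f.linear - LinearMap.id) = W) : ∃ x, f x - x ∈ W := by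
  set D := f.linear - LinearMap.id
  have hinj : Function.Injective (W.mapQ W D hW.ge) := by
    rw [← LinearMap.ker_eq_bot, eq_bot_iff]
    intro y hy
    obtain ⟨x, rfl⟩ := Submodule.Quotient.mk_surjective W y
    rw [LinearMap.mem_ker, Submodule.mapQ_apply, Submodule.Quotient.mk_eq_zero] at hy
    rw [Submodule.mem_bot, Submodule.Quotient.mk_eq_zero, ← hW]
    exact hy
  obtain ⟨y, hy⟩ := LinearMap.injective_iff_surjective.mp hinj (Submodule.Quotient.mk (-f 0))
  obtain ⟨x, rfl⟩ := Submodule.Quotient.mk_surjective W y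
  refine ⟨x, ?_⟩
  rw [Submodule.mapQ_apply, Submodule.Quotient.eq] at hy
  convert hy using 1
  rw [f.decomp]
  simp only [Pi.add_apply, LinearMap.sub_apply, LinearMap.id_coe, id_eq, map_zero, zero_add,
    sub_neg_eq_add, D]
  abel

theorem AffineEquiv.linear_apply_eq_of_commute_constVAdd {γ : V ≃ᵃ[k] V} {v : V}
    (h : Commute γ (AffineEquiv.constVAdd k V v)) : γ.linear v = v := by
  have h0 := congr($h 0)
  simp only [AffineEquiv.coe_mul, Function.comp_apply, AffineEquiv.constVAdd_apply,
    AffineEquiv.map_vadd] at h0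
  exact vadd_right_cancel _ h0

theorem AffineEquiv.pow_apply_eq_add_smul (γ : V ≃ᵃ[k] V) {v x : V} {c : k}
    (hv : γ.linear v = v) (hx : γ x = x + c • v) (n : ℕ) : (γ ^ n) x = x + ((n : k) * c) • v := by
  induction n with
  | zero => simp
  | succ n ih =>
    rw [pow_succ', AffineEquiv.coe_mul, Function.comp_apply, ih, add_comm x, ← vadd_eq_add,
      AffineEquiv.map_vadd, vadd_eq_add, map_smul, hv, hx]
    push_cast
    module

theorem AffineEquiv.linear_constVAdd_zpow_mul_pow (v : V) (j : ℤ) (γ : V ≃ᵃ[k] V) (n : ℕ) :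
    (AffineEquiv.constVAdd k V v ^ j * γ ^ n).linear = γ.linear ^ n := by
  have h : AffineEquiv.linearHom (AffineEquiv.constVAdd k V v) = 1 := rfl
  rw [← AffineEquiv.linearHom_apply, map_mul, map_zpow, map_pow, h, one_zpow, one_mul,
    AffineEquiv.linearHom_apply]

theorem AffineEquiv.constVAdd_zpow_mul_pow_apply (γ : V ≃ᵃ[k] V) {v x : V} {c : k}
    (hv : γ.linear v = v) (hx : γ x = x + c • v) (j : ℤ) (n : ℕ) :
    (AffineEquiv.constVAdd k V v ^ j * γ ^ n) x = x + ((j : k) + n * c) • v := by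
  rw [← AffineEquiv.constVAdd_zsmul, AffineEquiv.coe_mul, Function.comp_apply,
    AffineEquiv.constVAdd_apply, γ.pow_apply_eq_add_smul hv hx n, vadd_eq_add,
    ← Int.cast_smul_eq_zsmul k]
  module

end Affine

theorem statement6_general (m : ℕ) (Γ : Subgroup (AffGroup (m + 2)))
    (hPD : ProperlyDisc Γ)
    (γ τ : AffGroup (m + 2)) (hγ : γ ∈ Γ) (hτ : τ ∈ Γ) (v : Vec (m + 2)) (hv : v ≠ 0)
    (hτv : ∀ x : Vec (m + 2), τ x = x + v) (hcomm : γ * τ = τ * γ) :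
    ∀ (lam : ℝ) (A : Vec (m + 2) →ₗ[ℝ] Vec (m + 2)), 0 < lam →
      (∀ v', lorentzQ m (A v') = lorentzQ m v') →
      (∀ v', γ.linear v' = lam • A v') → lam = 1 := by
  intro lam A hlam hQA hlin
  by_contra hne
  obtain rfl : τ = AffineEquiv.constVAdd ℝ _ v := by
    ext x; simp [hτv, add_comm]
  have hconf : ∀ u, lorentzForm m (γ.linear u) = lam ^ 2 * lorentzForm m u := by
    intro u
    rw [hlin, QuadraticMap.map_smul, lorentzForm_apply, lorentzForm_apply, hQA, smul_eq_mul, sq]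
  have hμ : lam ^ 2 ≠ 1 := by rwa [Ne, pow_eq_one_iff_of_nonneg hlam.le two_ne_zero]
  have hLv : γ.linear v = v := AffineEquiv.linear_apply_eq_of_commute_constVAdd hcomm
  obtain ⟨x, hx⟩ := γ.toAffineMap.exists_apply_sub_mem_of_comap_eq
    (comap_sub_id_span_eq_span hconf hμ hv hLv)
  obtain ⟨c, hc⟩ := Submodule.mem_span_singleton.mp hx
  have hγx : γ x = x + c • v := by rw [hc, AffineEquiv.coe_toAffineMap, add_sub_cancel]
  set g : ℕ → AffGroup (m + 2) := fun n ↦ AffineEquiv.constVAdd ℝ _ v ^ (-⌊(n : ℝ) * c⌋) * γ ^ n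
  have hg_inj : Function.Injective g := by
    intro a b hab
    have := congr(lorentzForm m (($hab).linear (Pi.single (Fin.last (m + 1)) 1)))
    simp only [g, AffineEquiv.linear_constVAdd_zpow_mul_pow,
      QuadraticMap.apply_pow_apply_of_map_eq_mul hconf, lorentzForm_apply, lorentzQ_single_last,
      mul_neg_one, neg_inj] at this
    exact pow_right_injective₀ (by positivity) hμ this
  refine Set.infinite_of_injective_forall_mem hg_inj (fun n ↦ ?_)
    (hPD _ (isCompact_closedBall x ‖v‖))
  refine ⟨mul_mem (zpow_mem hτ _) (pow_mem hγ n), g n x,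
    ⟨x, Metric.mem_closedBall_self (norm_nonneg v), rfl⟩, ?_⟩
  rw [γ.constVAdd_zpow_mul_pow_apply hLv hγx, Int.cast_neg, neg_add_eq_sub, Int.self_sub_floor,
    Metric.mem_closedBall, dist_eq_norm, add_sub_cancel_left, norm_smul,
    Real.norm_of_nonneg (Int.fract_nonneg _)]
  exact mul_le_of_le_one_left (norm_nonneg v) (Int.fract_lt_one _).le

/-- If `Γ ≤ Sim_L(ℝ^{m+2})` acts freely and properly discontinuously on `ℝ^{m+2}` and
`γ ∈ Γ` commutes with a nontrivial pure translation `τ ∈ Γ`, then the similarity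
factor of `γ` equals `1`. -/
theorem statement6 (m : ℕ) (Γ : Subgroup (AffGroup (m + 2)))
    (hSim : ∀ γ ∈ Γ, InSimL m γ)
    (hFree : FreeAction Γ) (hPD : ProperlyDisc Γ)
    (γ τ : AffGroup (m + 2)) (hγ : γ ∈ Γ) (hτ : τ ∈ Γ) (v : Vec (m + 2)) (hv : v ≠ 0)
    (hτv : ∀ x : Vec (m + 2), τ x = x + v) (hcomm : γ * τ = τ * γ) :
    ∀ (lam : ℝ) (A : Vec (m + 2) →ₗ[ℝ] Vec (m + 2)), 0 < lam →
      (∀ v', lorentzQ m (A v') = lorentzQ m v') →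
      (∀ v', γ.linear v' = lam • A v') → lam = 1 :=
  statement6_general m Γ hPD γ τ hγ hτ v hv hτv hcomm
end
end

section
/- Let Γ be a subgroup of the affine group Aff(ℝ^n) acting freely, properly discontinuously and cocompactly on ℝ^n. Let T = Γ ∩ ℝ^n be the subgroup of pure translations in Γ, assume T ≅ ℤ^k with k ≥ 1, let V ⊆ ℝ^n be the ℝ-linear span of the translation vectors of T, and assume V is invariant under the linear parts of all elements of Γ. Then each γ ∈ Γ induces an affine transformation of the quotient vector space ℝ^n/V ≅ ℝ^{n−k}, giving a homomorphism ρ : Q → Aff(ℝ^{n−k}) of the quotient group Q = Γ/T, and: (1) the induced action of Q on ℝ^{n−k} is properly discontinuous; (2) the kernel of ρ is a finite group; (3) the quotient ℝ^{n−k}/ρ(Q) is compact. -/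
noncomputable section

/-!
The linear parts of `Γ` preserve `V'`, so each `γ ∈ Γ` descends to an affine map of `ℝⁿ/V'`, and
the translations in `T`, whose vectors lie in `V'`, descend to the identity.
For proper discontinuity, lift a compact `K ⊆ ℝⁿ/V'` to a compact `L ⊆ ℝⁿ`, and let `C` be the
parallelepiped spanned by a basis of `V'` consisting of translation vectors of `T`. If `[γ]` moves
`K` to meet `K`, then `γ` moves `L` to meet `L` modulo `V'`, and correcting by a translation
`τ ∈ T` (fractional parts of coordinates) makes `τγ` move `L + C` to meet `L + C`; proper
discontinuity of `Γ` leaves finitely many such `τγ`, hence finitely many classes `[γ]`.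
The kernel of `ρ` maps the compact set `{0}` onto itself, so it is finite too, and a compact set
meeting every `Γ`-orbit projects to one meeting every `Γ/T`-orbit.
-/

open Pointwise

theorem IsOpenMap.exists_isCompact_image_superset {X Y : Type*} [TopologicalSpace X]
    [WeaklyLocallyCompactSpace X] [TopologicalSpace Y] {f : X → Y} (hf : IsOpenMap f)
    {K : Set Y} (hK : IsCompact K) (hKf : K ⊆ Set.range f) :
    ∃ L : Set X, IsCompact L ∧ K ⊆ f '' L := by
  choose x hx using hKf
  choose L hL hLx using fun y (hy : y ∈ K) => exists_compact_mem_nhds (x hy)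
  obtain ⟨t, ht⟩ := hK.elim_nhds_subcover' (fun y hy => f '' L y hy)
    fun y hy => by simpa only [hx hy] using hf.image_mem_nhds (hLx y hy)
  exact ⟨⋃ y ∈ t, L y y.2, t.isCompact_biUnion fun y _ => hL y y.2,
    ht.trans (Set.image_iUnion₂ f _).superset⟩

theorem AddSubgroup.exists_isCompact_add_mem_of_mem_span {E : Type*} [AddCommGroup E]
    [Module ℝ E] [FiniteDimensional ℝ E] [TopologicalSpace E] [ContinuousAdd E]
    [ContinuousSMul ℝ E] (Λ : AddSubgroup E) :
    ∃ C : Set E, IsCompact C ∧ (0 : E) ∈ C ∧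
      ∀ x ∈ Submodule.span ℝ (Λ : Set E), ∃ a ∈ Λ, x + a ∈ C := by
  obtain ⟨t, htΛ, hspan, hli⟩ := exists_linearIndependent ℝ (Λ : Set E)
  have : Fintype t := hli.setFinite.fintype
  let comb : (t → ℝ) → E := fun c => ∑ i, c i • (i : E)
  refine ⟨comb '' Set.Icc 0 1, isCompact_Icc.image (by fun_prop), ⟨0, ?_, by simp [comb]⟩, ?_⟩
  · exact Set.left_mem_Icc.2 zero_le_one
  intro x hx
  rw [← hspan, ← Subtype.range_coe (s := t), Submodule.mem_span_range_iff_exists_fun] at hx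
  obtain ⟨c, rfl⟩ := hx
  refine ⟨-∑ i, ⌊c i⌋ • (i : E), Λ.neg_mem (Λ.sum_mem fun i _ => Λ.zsmul_mem (htΛ i.2) _),
    fun i => Int.fract (c i), ⟨fun i => Int.fract_nonneg _, fun i => (Int.fract_lt_one _).le⟩, ?_⟩
  simp only [comb, Int.fract, sub_smul, Finset.sum_sub_distrib, Int.cast_smul_eq_zsmul,
    ← sub_eq_add_neg]

namespace AffineEquiv

variable {k E : Type*} [Ring k] [AddCommGroup E] [Module k E] {V : Submodule k E}

def mapQ (f : E ≃ᵃ[k] E) (hf : V.map (f.linear : E →ₗ[k] E) = V) : (E ⧸ V) ≃ᵃ[k] (E ⧸ V) :=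
  (Submodule.Quotient.equiv V V f.linear hf).toAffineEquiv.trans
    (AffineEquiv.constVAdd k (E ⧸ V) (V.mkQ (f 0)))

@[simp]
theorem mapQ_mk (f : E ≃ᵃ[k] E) (hf : V.map (f.linear : E →ₗ[k] E) = V) (x : E) :
    f.mapQ hf (Submodule.Quotient.mk x) = Submodule.Quotient.mk (f x) := by
  have hfx : f x = f.linear x + f 0 := by simpa using f.map_vadd 0 x
  simp [mapQ, hfx, add_comm]

end AffineEquiv

section InvariantSubspace

variable {k E : Type*} [Ring k] [AddCommGroup E] [Module k E] {Γ : Subgroup (E ≃ᵃ[k] E)}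
  {V : Submodule k E}

theorem Submodule.map_linear_eq_of_forall_mem (hInv : ∀ γ ∈ Γ, ∀ v ∈ V, γ.linear v ∈ V)
    (γ : Γ) : V.map ((γ : E ≃ᵃ[k] E).linear : E →ₗ[k] E) = V := by
  refine le_antisymm (Submodule.map_le_iff_le_comap.2 fun v hv => hInv γ γ.2 v hv) fun v hv => ?_
  refine ⟨(γ : E ≃ᵃ[k] E).linear.symm v, ?_, (γ : E ≃ᵃ[k] E).linear.apply_symm_apply v⟩
  simpa [AffineEquiv.inv_def] using hInv _ (γ⁻¹).2 v hv

def mapQHom (hInv : ∀ γ ∈ Γ, ∀ v ∈ V, γ.linear v ∈ V) : Γ →* (E ⧸ V) ≃ᵃ[k] (E ⧸ V) where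
  toFun γ := (γ : E ≃ᵃ[k] E).mapQ (Submodule.map_linear_eq_of_forall_mem hInv γ)
  map_one' := by
    ext z
    obtain ⟨x, rfl⟩ := Submodule.Quotient.mk_surjective V z
    simp
  map_mul' γ δ := by
    ext z
    obtain ⟨x, rfl⟩ := Submodule.Quotient.mk_surjective V z
    simp

@[simp]
theorem mapQHom_mk (hInv : ∀ γ ∈ Γ, ∀ v ∈ V, γ.linear v ∈ V) (γ : Γ) (x : E) :
    mapQHom hInv γ (Submodule.Quotient.mk x) = Submodule.Quotient.mk ((γ : E ≃ᵃ[k] E) x) :=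
  AffineEquiv.mapQ_mk _ _ x

end InvariantSubspace

section Translations

variable {k E : Type*} [Ring k] [AddCommGroup E] [Module k E] {Γ : Subgroup (E ≃ᵃ[k] E)}

def translationVectors (T : Subgroup Γ) : AddSubgroup E where
  carrier := {a | ∃ τ : Γ, τ ∈ T ∧ ∀ x, (τ : E ≃ᵃ[k] E) x = x + a}
  zero_mem' := ⟨1, T.one_mem, fun x => (add_zero x).symm⟩
  add_mem' := by
    rintro a b ⟨τ, hτ, ha⟩ ⟨σ, hσ, hb⟩
    refine ⟨τ * σ, T.mul_mem hτ hσ, fun x => ?_⟩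
    change (τ : E ≃ᵃ[k] E) ((σ : E ≃ᵃ[k] E) x) = _
    rw [hb, ha, add_assoc, add_comm b]
  neg_mem' := by
    rintro a ⟨τ, hτ, ha⟩
    refine ⟨τ⁻¹, T.inv_mem hτ, fun x => ?_⟩
    rw [Subgroup.coe_inv, AffineEquiv.inv_def, AffineEquiv.symm_apply_eq, ha, neg_add_cancel_right]

theorem le_ker_mapQHom {T : Subgroup Γ} {V : Submodule k E}
    (hInv : ∀ γ ∈ Γ, ∀ v ∈ V, γ.linear v ∈ V)
    (hT : ∀ τ ∈ T, ∃ a, ∀ x, (τ : E ≃ᵃ[k] E) x = x + a)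
    (hΛV : (translationVectors T : Set E) ⊆ V) : T ≤ (mapQHom hInv).ker := by
  intro τ hτ
  obtain ⟨a, ha⟩ := hT τ hτ
  have haV : a ∈ V := hΛV ⟨τ, hτ, ha⟩
  ext z
  obtain ⟨x, rfl⟩ := Submodule.Quotient.mk_surjective V z
  simp [ha, Submodule.Quotient.mk_add, (Submodule.Quotient.mk_eq_zero V).2 haV]

end Translations

theorem ProperlyDisc.finite_quotient_image_inter_nonempty {n : ℕ} {Γ : Subgroup (AffGroup n)}
    {T : Subgroup Γ} [T.Normal] {V : Submodule ℝ (Vec n)} (hPD : ProperlyDisc Γ)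
    (hInv : ∀ γ ∈ Γ, ∀ v ∈ V, γ.linear v ∈ V)
    (hVΛ : V ≤ Submodule.span ℝ (translationVectors T : Set (Vec n)))
    (hker : T ≤ (mapQHom hInv).ker) {K : Set (Vec n ⧸ V)} (hK : IsCompact K) :
    {q : Γ ⧸ T | (⇑(QuotientGroup.lift T (mapQHom hInv) hker q) '' K ∩ K).Nonempty}.Finite := by
  obtain ⟨L, hL, hKL⟩ := V.isOpenMap_mkQ.exists_isCompact_image_superset hK
    (V.mkQ_surjective.range_eq ▸ Set.subset_univ K)
  obtain ⟨C, hC, hC0, hCΛ⟩ := (translationVectors T).exists_isCompact_add_mem_of_mem_span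
  have hLC : L ⊆ L + C := fun x hx => by simpa using Set.add_mem_add hx hC0
  refine (((hPD _ (hL.add hC)).preimage Subtype.val_injective.injOn).image
    (QuotientGroup.mk : Γ → Γ ⧸ T)).subset ?_
  rintro q ⟨-, ⟨z, hzK, rfl⟩, hγz⟩
  obtain ⟨γ, rfl⟩ := QuotientGroup.mk_surjective q
  obtain ⟨x, hxL, rfl⟩ := hKL hzK
  obtain ⟨y, hyL, hy⟩ := hKL hγz
  simp only [Submodule.mkQ_apply, QuotientGroup.lift_mk, mapQHom_mk] at hy
  have hγxy : (γ : AffGroup n) x - y ∈ V := (Submodule.Quotient.eq V).1 hy.symm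
  obtain ⟨a, ⟨τ, hτT, hτ⟩, haC⟩ := hCΛ _ (hVΛ hγxy)
  refine ⟨τ * γ, ⟨(τ * γ).2, _, ⟨x, hLC hxL, rfl⟩, ?_⟩, ?_⟩
  · change (τ : AffGroup n) ((γ : AffGroup n) x) ∈ L + C
    rw [hτ, show (γ : AffGroup n) x + a = y + ((γ : AffGroup n) x - y + a) by abel]
    exact Set.add_mem_add hyL haC
  · rw [QuotientGroup.mk_mul, (QuotientGroup.eq_one_iff τ).2 hτT, one_mul]

theorem statement7_general (n : ℕ) (Γ : Subgroup (AffGroup n))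
    (hPD : ProperlyDisc Γ) (hCC : CocompactAction Γ)
    (T : Subgroup ↥Γ) [T.Normal]
    (hT : ∀ γ : ↥Γ, γ ∈ T ↔ ∃ a : Vec n, ∀ x : Vec n, (γ : AffGroup n) x = x + a)
    (V' : Submodule ℝ (Vec n))
    (hV : V' = Submodule.span ℝ
      {a : Vec n | ∃ γ : ↥Γ, γ ∈ T ∧ ∀ x : Vec n, (γ : AffGroup n) x = x + a})
    (hInv : ∀ γ ∈ Γ, ∀ v ∈ V', γ.linear v ∈ V') :
    ∃ ρ : (↥Γ ⧸ T) →* ((Vec n ⧸ V') ≃ᵃ[ℝ] (Vec n ⧸ V')),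
      -- each `γ ∈ Γ` induces the affine transformation `ρ ⟦γ⟧` of `ℝ^n/V'`
      (∀ γ : ↥Γ, ∀ x : Vec n,
        ρ (QuotientGroup.mk γ) (Submodule.Quotient.mk x) =
          Submodule.Quotient.mk ((γ : AffGroup n) x)) ∧
      -- (1) the induced action of `Q = Γ/T` on `ℝ^n/V'` is properly discontinuous
      (∀ K : Set (Vec n ⧸ V'), IsCompact K →
        {q : ↥Γ ⧸ T | (⇑(ρ q) '' K ∩ K).Nonempty}.Finite) ∧
      -- (2) the kernel of `ρ` is a finite group
      (ρ.ker : Set (↥Γ ⧸ T)).Finite ∧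
      -- (3) the quotient `(ℝ^n/V')/ρ(Q)` is compact
      (∃ K : Set (Vec n ⧸ V'), IsCompact K ∧
        ∀ z : Vec n ⧸ V', ∃ q : ↥Γ ⧸ T, ρ q z ∈ K) := by
  have hspan : V' = Submodule.span ℝ (translationVectors T : Set (Vec n)) := hV
  have hker : T ≤ (mapQHom hInv).ker :=
    le_ker_mapQHom hInv (fun τ hτ => (hT τ).1 hτ) (hspan ▸ Submodule.subset_span)
  set ρ := QuotientGroup.lift T (mapQHom hInv) hker
  have hρ (γ : Γ) (x : Vec n) : ρ γ (Submodule.Quotient.mk x) =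
      Submodule.Quotient.mk ((γ : AffGroup n) x) := mapQHom_mk hInv γ x
  have hproper (K : Set (Vec n ⧸ V')) (hK : IsCompact K) :
      {q : Γ ⧸ T | (⇑(ρ q) '' K ∩ K).Nonempty}.Finite :=
    hPD.finite_quotient_image_inter_nonempty hInv hspan.le hker hK
  refine ⟨ρ, hρ, hproper, ?_, ?_⟩
  · refine (hproper {0} isCompact_singleton).subset fun q hq => ⟨0, ⟨0, rfl, ?_⟩, rfl⟩
    rw [MonoidHom.mem_ker.1 hq, AffineEquiv.one_def, AffineEquiv.refl_apply]
  · obtain ⟨K, hK, hKmeets⟩ := hCC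
    refine ⟨Submodule.Quotient.mk '' K, hK.image continuous_quot_mk, fun z => ?_⟩
    obtain ⟨x, rfl⟩ := Submodule.Quotient.mk_surjective V' z
    obtain ⟨γ, hγ, hγx⟩ := hKmeets x
    exact ⟨(⟨γ, hγ⟩ : Γ), (hρ ⟨γ, hγ⟩ x).symm ▸ Set.mem_image_of_mem _ hγx⟩

/-- Let `Γ ≤ Aff(ℝ^n)` act freely, properly discontinuously and cocompactly on `ℝ^n`,
let `T = Γ ∩ ℝ^n` be its subgroup of pure translations, assumed isomorphic to `ℤ^k`
with `k ≥ 1`, let `V'` be the `ℝ`-span of the translation vectors of `T`, and assume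
`V'` is invariant under the linear parts of all elements of `Γ`.  Then each `γ ∈ Γ`
descends to an affine transformation of `ℝ^n/V' (≅ ℝ^{n-k})`, yielding a homomorphism
`ρ : Q = Γ/T → Aff(ℝ^{n-k})` such that (1) the induced `Q`-action on `ℝ^{n-k}` is
properly discontinuous, (2) `ker ρ` is finite, and (3) `ℝ^{n-k}/ρ(Q)` is compact. -/
theorem statement7 (n k : ℕ) (hk : 1 ≤ k) (Γ : Subgroup (AffGroup n))
    (hFree : FreeAction Γ) (hPD : ProperlyDisc Γ) (hCC : CocompactAction Γ)
    (T : Subgroup ↥Γ) [T.Normal]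
    (hT : ∀ γ : ↥Γ, γ ∈ T ↔ ∃ a : Vec n, ∀ x : Vec n, (γ : AffGroup n) x = x + a)
    (hTZk : Nonempty (↥T ≃* Multiplicative (Fin k → ℤ)))
    (V' : Submodule ℝ (Vec n))
    (hV : V' = Submodule.span ℝ
      {a : Vec n | ∃ γ : ↥Γ, γ ∈ T ∧ ∀ x : Vec n, (γ : AffGroup n) x = x + a})
    (hInv : ∀ γ ∈ Γ, ∀ v ∈ V', γ.linear v ∈ V') :
    ∃ ρ : (↥Γ ⧸ T) →* ((Vec n ⧸ V') ≃ᵃ[ℝ] (Vec n ⧸ V')),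
      -- each `γ ∈ Γ` induces the affine transformation `ρ ⟦γ⟧` of `ℝ^n/V'`
      (∀ γ : ↥Γ, ∀ x : Vec n,
        ρ (QuotientGroup.mk γ) (Submodule.Quotient.mk x) =
          Submodule.Quotient.mk ((γ : AffGroup n) x)) ∧
      -- (1) the induced action of `Q = Γ/T` on `ℝ^n/V'` is properly discontinuous
      (∀ K : Set (Vec n ⧸ V'), IsCompact K →
        {q : ↥Γ ⧸ T | (⇑(ρ q) '' K ∩ K).Nonempty}.Finite) ∧
      -- (2) the kernel of `ρ` is a finite group
      (ρ.ker : Set (↥Γ ⧸ T)).Finite ∧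
      -- (3) the quotient `(ℝ^n/V')/ρ(Q)` is compact
      (∃ K : Set (Vec n ⧸ V'), IsCompact K ∧
        ∀ z : Vec n ⧸ V', ∃ q : ↥Γ ⧸ T, ρ q z ∈ K) :=
  statement7_general n Γ hPD hCC T hT V' hV hInv
end
end
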